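/- For |q| < 1 and |t| < 1, the sum over n ≥ 0 of t^n / ((1-q)(1-q^2)···(1-q^n)) equals the infinite product 1 / ∏_{k≥0} (1 - t q^k). (Euler's q-exponential identity.) -/

import Mathlib

open scoped BigOperators

noncomputable def qPoch (q : ℂ) (n : ℕ) : ℂ := ∏ k ∈ Finset.range n, (1 - q ^ (k + 1))

noncomputable def qPochInf (q : ℂ) : ℂ := ∏' k : ℕ, (1 - q ^ (k + 1))

noncomputable def hseries (b : ℕ) (q : ℂ) : ℂ :=
  ∑' n : ℤ, (if Odd b then (-1 : ℂ) ^ n else if 0 ≤ n then 1 else -1) *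
    q ^ ((b : ℤ) * n * (n + 1) / 2 - n)

/-!
Write `e_q(s) = ∑ sⁿ / (q)ₙ`. Since `(q)ₙ = (q)ₙ₋₁ (1 - qⁿ)`, the series `e_q(s) - e_q(qs)` is
termwise `s` times the series of `e_q(s)`, so `e_q(qs) = (1 - s) e_q(s)`. Iterating,
`e_q(qⁿ t) = (t)ₙ e_q(t)`. As `n → ∞` the left side tends to `e_q(0) = 1` by Tannery's theorem
(every term is dominated by the corresponding term of the absolutely convergent series at `‖t‖`),
while the right side tends to `(t)_∞ e_q(t)`.
-/

open Filter Topology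

noncomputable def qExp (q s : ℂ) : ℂ := ∑' n : ℕ, s ^ n / qPoch q n

section

variable {q : ℂ}

lemma qPoch_zero (q : ℂ) : qPoch q 0 = 1 := Finset.prod_range_zero _

lemma qPoch_succ (q : ℂ) (n : ℕ) : qPoch q (n + 1) = qPoch q n * (1 - q ^ (n + 1)) :=
  Finset.prod_range_succ _ n

lemma one_sub_pow_succ_ne_zero (hq : ‖q‖ < 1) (n : ℕ) : 1 - q ^ (n + 1) ≠ 0 := by
  refine sub_ne_zero.2 fun h => ?_
  have : ‖q‖ ^ (n + 1) < 1 := pow_lt_one₀ (norm_nonneg q) hq n.succ_ne_zero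
  simp [← norm_pow, ← h] at this

lemma qPoch_ne_zero (hq : ‖q‖ < 1) (n : ℕ) : qPoch q n ≠ 0 :=
  Finset.prod_ne_zero_iff.2 fun k _ => one_sub_pow_succ_ne_zero hq k

lemma norm_pow_mul_le (hq : ‖q‖ < 1) (n : ℕ) (t : ℂ) : ‖q ^ n * t‖ ≤ ‖t‖ := by
  rw [norm_mul, norm_pow]
  exact mul_le_of_le_one_left (norm_nonneg t) (pow_le_one₀ (norm_nonneg q) hq.le)

lemma tendsto_norm_one_sub_pow_succ (hq : ‖q‖ < 1) :
    Tendsto (fun n : ℕ => ‖1 - q ^ (n + 1)‖) atTop (𝓝 1) := by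
  have h := (tendsto_pow_atTop_nhds_zero_of_norm_lt_one hq).comp (tendsto_add_atTop_nat 1)
  simpa using (tendsto_const_nhds (x := (1 : ℂ))).sub h |>.norm

lemma summable_norm_pow_div_qPoch (hq : ‖q‖ < 1) {s : ℂ} (hs : ‖s‖ < 1) :
    Summable fun n : ℕ => ‖s ^ n / qPoch q n‖ := by
  obtain ⟨l, hsl, hl⟩ := exists_between hs
  have hl0 : 0 < l := (norm_nonneg s).trans_lt hsl
  refine summable_of_ratio_norm_eventually_le hl ?_
  filter_upwards [(tendsto_norm_one_sub_pow_succ hq).eventually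
    (lt_mem_nhds ((div_lt_one hl0).2 hsl))] with n hn
  have hratio : ‖s‖ / ‖1 - q ^ (n + 1)‖ ≤ l :=
    div_le_of_le_mul₀ (norm_nonneg _) hl0.le ((div_lt_iff₀' hl0).1 hn).le
  rw [qPoch_succ, pow_succ s]
  simp only [norm_norm, norm_div, norm_mul, norm_pow]
  rw [mul_div_mul_comm, mul_comm l]
  gcongr

lemma qExp_mul_left (hq : ‖q‖ < 1) {s : ℂ} (hs : ‖s‖ < 1) :
    qExp q (q * s) = (1 - s) * qExp q s := by
  have hqs : ‖q * s‖ < 1 := by simpa using norm_pow_mul_le hq 1 s |>.trans_lt hs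
  have hS := (summable_norm_pow_div_qPoch hq hs).of_norm
  have hqS := (summable_norm_pow_div_qPoch hq hqs).of_norm
  have hterm : ∀ n : ℕ, s ^ (n + 1) / qPoch q (n + 1) - (q * s) ^ (n + 1) / qPoch q (n + 1)
      = s * (s ^ n / qPoch q n) := by
    intro n
    rw [qPoch_succ]
    field_simp [qPoch_ne_zero hq n, one_sub_pow_succ_ne_zero hq n]
    ring
  have hdiff : qExp q s - qExp q (q * s) = s * qExp q s := by
    rw [qExp, qExp, ← hS.tsum_sub hqS, (hS.sub hqS).tsum_eq_zero_add]
    simp [hterm, tsum_mul_left]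
  linear_combination -hdiff

lemma qExp_pow_mul (hq : ‖q‖ < 1) {t : ℂ} (ht : ‖t‖ < 1) (n : ℕ) :
    qExp q (q ^ n * t) = (∏ k ∈ Finset.range n, (1 - t * q ^ k)) * qExp q t := by
  induction n with
  | zero => simp
  | succ n ih =>
    rw [pow_succ', mul_assoc, qExp_mul_left hq ((norm_pow_mul_le hq n t).trans_lt ht), ih,
      Finset.prod_range_succ]
    ring

lemma tendsto_qExp_pow_mul (hq : ‖q‖ < 1) {t : ℂ} (ht : ‖t‖ < 1) :
    Tendsto (fun n : ℕ => qExp q (q ^ n * t)) atTop (𝓝 1) := by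
  have hlim : ∀ m : ℕ, Tendsto (fun n : ℕ => (q ^ n * t) ^ m / qPoch q m) atTop
      (𝓝 (if m = 0 then 1 else 0)) := by
    rintro (_ | m)
    · simp [qPoch_zero]
    · simpa using (((tendsto_pow_atTop_nhds_zero_of_norm_lt_one hq).mul_const t).pow
        (m + 1)).div_const (qPoch q (m + 1))
  have hbound : ∀ n m : ℕ, ‖(q ^ n * t) ^ m / qPoch q m‖ ≤ ‖t ^ m / qPoch q m‖ := by
    intro n m
    simp only [norm_div, norm_pow]
    gcongr
    exact norm_pow_mul_le hq n t
  simpa [qExp] using tendsto_tsum_of_dominated_convergence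
    (summable_norm_pow_div_qPoch hq ht) hlim (Eventually.of_forall hbound)

lemma multipliable_one_sub_mul_pow (hq : ‖q‖ < 1) (t : ℂ) :
    Multipliable fun k : ℕ => 1 - t * q ^ k := by
  simpa [sub_eq_add_neg] using multipliable_one_add_of_summable (f := fun k : ℕ => -(t * q ^ k))
    (by simpa using (summable_geometric_of_lt_one (norm_nonneg q) hq).mul_left ‖t‖)

end

theorem euler_q_exponential (q t : ℂ) (hq : ‖q‖ < 1) (ht : ‖t‖ < 1) :
    ∑' n : ℕ, t ^ n / qPoch q n = 1 / ∏' k : ℕ, (1 - t * q ^ k) := by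
  have hprod := (multipliable_one_sub_mul_pow hq t).hasProd.tendsto_prod_nat.mul_const (qExp q t)
  have hlim : Tendsto (fun n : ℕ => qExp q (q ^ n * t)) atTop
      (𝓝 ((∏' k : ℕ, (1 - t * q ^ k)) * qExp q t)) := by
    simpa only [qExp_pow_mul hq ht] using hprod
  exact eq_one_div_of_mul_eq_one_right (tendsto_nhds_unique hlim (tendsto_qExp_pow_mul hq ht))
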